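/- arXiv:2302.05793 — 3 statements merged into one kernel-verified Lean document; each statement's English description precedes it below -/
import Mathlib

section
/- Let G = (S, A) be a finite directed acyclic graph with a unique source s₀ and set of sinks X. Let F : T → ℝ≥0 be a nonnegative function on the set T of complete trajectories (directed paths from s₀ to some sink). Define the edge flow F(s→s') = Σ_{τ ∋ (s→s')} F(τ) and the state flow F(s) = Σ_{τ ∋ s} F(τ). Then for every state s' that is neither the source nor a sink, the in-flow equals the out-flow: Σ_{s : (s→s') ∈ A} F(s→s') = Σ_{s'' : (s'→s'') ∈ A} F(s'→s''), and both equal F(s'). -/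
/-!
A complete trajectory is a path in a DAG, so it visits every state at most once. Hence a state
`s' ≠ s₀` lying on a trajectory `τ` is entered by exactly one edge of `τ` (it is not the first
state of `τ`) and, not being a sink, left by exactly one edge of `τ` (it is not the last state).
Exchanging the order of summation, the in-flow and the out-flow of `s'` therefore both count each
trajectory through `s'` exactly once, which is the state flow `F(s')`.
-/

open Finset
open scoped Classical

/-- A sink: a state with no outgoing edge. -/
def IsSink {S : Type*} (A : S → S → Prop) (x : S) : Prop := ∀ y, ¬ A x y

/-- The edge `(s, s')` occurs in the list `l` as a pair of consecutive states. -/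
def EdgeIn {S : Type*} (l : List S) (s s' : S) : Prop := (s, s') ∈ l.zip l.tail

/-- A complete trajectory: a nonempty directed path starting at `s₀` and ending at a sink. -/
def CompleteTraj {S : Type*} (A : S → S → Prop) (s₀ : S) (l : List S) : Prop :=
  l ≠ [] ∧ l.head? = some s₀ ∧ l.Chain' A ∧ ∃ x, l.getLast? = some x ∧ IsSink A x

theorem Finset.sum_ite_eq_ite_exists {ι M : Type*} [AddCommMonoid M] {s : Finset ι}
    {p : ι → Prop} [DecidablePred p] [Decidable (∃ i, p i)] (hp : ∀ i j, p i → p j → i = j)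
    (hs : ∀ i, p i → i ∈ s) (c : M) :
    ∑ i ∈ s, (if p i then c else 0) = if ∃ i, p i then c else 0 := by
  split_ifs with h
  · obtain ⟨i, hi⟩ := h
    rw [sum_eq_single_of_mem i (hs i hi) fun j _ hji => if_neg fun hj => hji (hp j i hj hi),
      if_pos hi]
  · exact sum_eq_zero fun i _ => if_neg fun hi => h ⟨i, hi⟩

theorem Finset.sum_sum_filter_comm {ι κ M : Type*} [AddCommMonoid M] (s : Finset ι)
    (t : Finset κ) (p : ι → κ → Prop) [∀ i j, Decidable (p i j)] (f : κ → M) :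
    ∑ i ∈ s, ∑ j ∈ t with p i j, f j = ∑ j ∈ t, ∑ i ∈ s, if p i j then f j else 0 := by
  simp_rw [sum_filter]
  exact sum_comm

namespace List
variable {α : Type*}

theorem zip_self_tail (l : List α) : l.zip l.tail = l.dropLast.zip l.tail := by
  induction l using List.twoStepInduction <;> simp_all

theorem map_fst_zip_self_tail (l : List α) : (l.zip l.tail).map Prod.fst = l.dropLast := by
  rw [zip_self_tail, map_fst_zip (by simp)]

theorem map_snd_zip_self_tail (l : List α) : (l.zip l.tail).map Prod.snd = l.tail :=
  map_snd_zip (by simp)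

theorem IsChain.nodup_of_acyclic {r : α → α → Prop} (hr : ∀ a, ¬ Relation.TransGen r a a)
    {l : List α} (hl : l.IsChain r) : l.Nodup :=
  haveI : Std.Irrefl (Relation.TransGen r) := ⟨hr⟩
  (hl.imp fun _ _ => Relation.TransGen.single).pairwise.nodup

theorem IsChain.rel_of_mem_zip_tail {r : α → α → Prop} {l : List α} (hl : l.IsChain r)
    {a b : α} (h : (a, b) ∈ l.zip l.tail) : r a b := by
  rw [zip_self_tail] at h
  exact forall₂_zip (isChain_iff_forall₂.1 hl) h

end List

namespace EdgeIn
variable {S : Type*} {l : List S} {s t u : S}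

theorem exists_iff_mem_tail : (∃ s, EdgeIn l s t) ↔ t ∈ l.tail := by
  rw [← List.map_snd_zip_self_tail l]; simp [EdgeIn]

theorem exists_iff_mem_dropLast : (∃ t, EdgeIn l s t) ↔ s ∈ l.dropLast := by
  rw [← List.map_fst_zip_self_tail l]; simp [EdgeIn]

theorem left_unique (hl : l.Nodup) (hs : EdgeIn l s u) (ht : EdgeIn l t u) : s = t := by
  have hsnd : ((l.zip l.tail).map Prod.snd).Nodup := by
    rw [List.map_snd_zip_self_tail]
    exact hl.sublist l.tail_sublist
  exact congrArg Prod.fst (List.inj_on_of_nodup_map hsnd hs ht rfl)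

theorem right_unique (hl : l.Nodup) (ht : EdgeIn l s t) (hu : EdgeIn l s u) : t = u := by
  have hfst : ((l.zip l.tail).map Prod.fst).Nodup := by
    rw [List.map_fst_zip_self_tail]
    exact hl.sublist l.dropLast_sublist
  exact congrArg Prod.snd (List.inj_on_of_nodup_map hfst ht hu rfl)

end EdgeIn

section Flow
variable {S M : Type*} [AddCommMonoid M] {A : S → S → Prop} {s₀ s : S} {τ : List S}

theorem List.IsChain.sum_ite_edgeIn_into [Fintype S] [DecidableEq S] (hc : τ.IsChain A)
    (hτ : τ.Nodup) (c : M) :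
    ∑ r ∈ univ.filter (A · s), (if EdgeIn τ r s then c else 0) = if s ∈ τ.tail then c else 0 := by
  rw [sum_ite_eq_ite_exists (fun _ _ => EdgeIn.left_unique hτ)
    fun r h => Finset.mem_filter.2 ⟨mem_univ r, hc.rel_of_mem_zip_tail h⟩]
  exact if_congr EdgeIn.exists_iff_mem_tail rfl rfl

theorem List.IsChain.sum_ite_edgeIn_out [Fintype S] [DecidableEq S] (hc : τ.IsChain A)
    (hτ : τ.Nodup) (c : M) :
    ∑ t ∈ univ.filter (A s ·), (if EdgeIn τ s t then c else 0)
      = if s ∈ τ.dropLast then c else 0 := by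
  rw [sum_ite_eq_ite_exists (fun _ _ => EdgeIn.right_unique hτ)
    fun t h => Finset.mem_filter.2 ⟨mem_univ t, hc.rel_of_mem_zip_tail h⟩]
  exact if_congr EdgeIn.exists_iff_mem_dropLast rfl rfl

namespace CompleteTraj

theorem isChain (hτ : CompleteTraj A s₀ τ) : τ.IsChain A := hτ.2.2.1

theorem nodup (hacyc : ∀ s, ¬ Relation.TransGen A s s) (hτ : CompleteTraj A s₀ τ) : τ.Nodup :=
  hτ.isChain.nodup_of_acyclic hacyc

theorem mem_tail_iff (hτ : CompleteTraj A s₀ τ) (hs : s ≠ s₀) : s ∈ τ.tail ↔ s ∈ τ := by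
  obtain ⟨hne, hhead, -⟩ := hτ
  obtain ⟨a, rest, rfl⟩ := List.exists_cons_of_ne_nil hne
  obtain rfl : a = s₀ := by simpa using hhead
  simp [hs]

theorem mem_dropLast_iff (hτ : CompleteTraj A s₀ τ) (hs : ¬ IsSink A s) :
    s ∈ τ.dropLast ↔ s ∈ τ := by
  obtain ⟨-, -, -, x, hlast, hx⟩ := hτ
  conv_rhs => rw [← List.dropLast_append_getLast? x hlast]
  rw [List.mem_append, List.mem_singleton, or_iff_left fun (h : s = x) => hs (h ▸ hx)]

end CompleteTraj

noncomputable def edgeFlow (T : Finset (List S)) (F : List S → M) (r t : S) : M :=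
  ∑ τ ∈ T with EdgeIn τ r t, F τ

def stateFlow [DecidableEq S] (T : Finset (List S)) (F : List S → M) (s : S) : M :=
  ∑ τ ∈ T with s ∈ τ, F τ

variable [Fintype S] [DecidableEq S] {T : Finset (List S)} (F : List S → M)

theorem sum_edgeFlow_into (hacyc : ∀ s, ¬ Relation.TransGen A s s)
    (hT : ∀ τ ∈ T, CompleteTraj A s₀ τ) (hs : s ≠ s₀) :
    ∑ r ∈ univ.filter (A · s), edgeFlow T F r s = stateFlow T F s := by
  unfold edgeFlow stateFlow
  rw [sum_sum_filter_comm, sum_filter]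
  refine sum_congr rfl fun τ hτ => ?_
  have htraj := hT τ hτ
  rw [htraj.isChain.sum_ite_edgeIn_into (htraj.nodup hacyc)]
  exact if_congr (htraj.mem_tail_iff hs) rfl rfl

theorem sum_edgeFlow_out (hacyc : ∀ s, ¬ Relation.TransGen A s s)
    (hT : ∀ τ ∈ T, CompleteTraj A s₀ τ) (hs : ¬ IsSink A s) :
    ∑ t ∈ univ.filter (A s ·), edgeFlow T F s t = stateFlow T F s := by
  unfold edgeFlow stateFlow
  rw [sum_sum_filter_comm, sum_filter]
  refine sum_congr rfl fun τ hτ => ?_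
  have htraj := hT τ hτ
  rw [htraj.isChain.sum_ite_edgeIn_out (htraj.nodup hacyc)]
  exact if_congr (htraj.mem_dropLast_iff hs) rfl rfl

end Flow

theorem flow_matching_general {S : Type*} [Fintype S] [DecidableEq S] (A : S → S → Prop)
    (s₀ : S)
    (hacyc : ∀ s : S, ¬ Relation.TransGen A s s)
    (T : Finset (List S))
    (hT : ∀ l, l ∈ T ↔ CompleteTraj A s₀ l)
    (F : List S → ℝ)
    (s' : S) (hs' : s' ≠ s₀) (hs'' : ¬ IsSink A s') :
    (∑ s ∈ univ.filter (fun s => A s s'), ∑ τ ∈ T.filter (fun l => EdgeIn l s s'), F τ)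
      = (∑ t ∈ univ.filter (fun t => A s' t), ∑ τ ∈ T.filter (fun l => EdgeIn l s' t), F τ)
    ∧ (∑ s ∈ univ.filter (fun s => A s s'), ∑ τ ∈ T.filter (fun l => EdgeIn l s s'), F τ)
      = ∑ τ ∈ T.filter (fun l => s' ∈ l), F τ := by
  have htraj : ∀ τ ∈ T, CompleteTraj A s₀ τ := fun τ hτ => (hT τ).1 hτ
  have hin := sum_edgeFlow_into F hacyc htraj hs'
  have hout := sum_edgeFlow_out F hacyc htraj hs''
  exact ⟨hin.trans hout.symm, hin⟩

/-- Flow matching: in a finite DAG with unique source `s₀`, for a nonnegative trajectory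
flow `F`, at every state `s'` which is neither the source nor a sink, the in-flow
(sum of edge flows into `s'`) equals the out-flow (sum of edge flows out of `s'`),
and both equal the state flow `F(s')`. -/
theorem flow_matching {S : Type*} [Fintype S] [DecidableEq S] (A : S → S → Prop)
    (s₀ : S)
    (hacyc : ∀ s : S, ¬ Relation.TransGen A s s)
    (hsource : ∀ y, ¬ A y s₀)
    (huniqsource : ∀ s, (∀ y, ¬ A y s) → s = s₀)
    (T : Finset (List S))
    (hT : ∀ l, l ∈ T ↔ CompleteTraj A s₀ l)
    (F : List S → ℝ) (hF : ∀ τ ∈ T, 0 ≤ F τ)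
    (s' : S) (hs' : s' ≠ s₀) (hs'' : ¬ IsSink A s') :
    (∑ s ∈ univ.filter (fun s => A s s'), ∑ τ ∈ T.filter (fun l => EdgeIn l s s'), F τ)
      = (∑ t ∈ univ.filter (fun t => A s' t), ∑ τ ∈ T.filter (fun l => EdgeIn l s' t), F τ)
    ∧ (∑ s ∈ univ.filter (fun s => A s s'), ∑ τ ∈ T.filter (fun l => EdgeIn l s s'), F τ)
      = ∑ τ ∈ T.filter (fun l => s' ∈ l), F τ :=
  flow_matching_general A s₀ hacyc T hT F s' hs' hs''
end

section
/- Let G = (S, A) be a finite DAG with source s₀ and sinks X, with forward policy P_F and backward policy P_B induced by a positive flow F with partition function Z. Then for every complete trajectory τ = (s₀ → s₁ → ... → s_n) with s_n = x ∈ X, the trajectory balance identity holds: Z · Π_{t=0}^{n-1} P_F(s_{t+1}|s_t) = R(x) · Π_{t=0}^{n-1} P_B(s_t|s_{t+1}), where R(x) is the in-flow of x and Z is the out-flow of s₀. -/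
open Finset
open scoped Classical

/-!
Writing `F_out`, `F_in` for the out- and in-flow, the left-hand side is
`F_out(s₀) · ∏ F(sₜ→sₜ₊₁) / ∏_{t<n} F_out(sₜ)` and the right-hand side is
`F_in(sₙ) · ∏ F(sₜ→sₜ₊₁) / ∏_{0<t≤n} F_in(sₜ)`. The factors at `s₀` and at `sₙ` cancel,
and at every interior state flow matching gives `F_out(sₜ) = F_in(sₜ)`.
For the trivial trajectory `[s₀]`, `s₀` is both a source and a sink, so both sides vanish.
-/

section Telescoping

variable {α K : Type*} [Field K] {R : α → α → Prop} (w : α → α → K) {o i : α → K}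

theorem List.IsChain.mul_prod_div_fst_eq_mul_prod_div_snd
    (ho : ∀ s s', R s s' → o s ≠ 0) (hi : ∀ s s', R s s' → i s' ≠ 0)
    (hmatch : ∀ s s' s'', R s s' → R s' s'' → o s' = i s')
    {a b : α} {rest : List α} (h : (a :: b :: rest).IsChain R) :
      o a * (((a :: b :: rest).zip (b :: rest)).map fun e => w e.1 e.2 / o e.1).prod =
        i ((b :: rest).getLast (List.cons_ne_nil _ _)) *
          (((a :: b :: rest).zip (b :: rest)).map fun e => w e.1 e.2 / i e.2).prod := by
  induction rest generalizing a b with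
  | nil =>
    have hab := (List.isChain_cons_cons.mp h).1
    simp only [List.zip_cons_cons, List.zip_nil_right, List.map_cons, List.map_nil,
      List.prod_cons, List.prod_nil, mul_one, List.getLast_singleton]
    rw [mul_div_cancel₀ _ (ho a b hab), mul_div_cancel₀ _ (hi a b hab)]
  | cons c rest ih =>
    obtain ⟨hab, h'⟩ := List.isChain_cons_cons.mp h
    have hbc := (List.isChain_cons_cons.mp h').1
    rw [List.zip_cons_cons, List.map_cons, List.map_cons, List.prod_cons, List.prod_cons,
      List.getLast_cons_cons]
    have hoa := ho a b hab
    have hob := ho b c hbc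
    calc o a * (w a b / o a * _)
        = w a b / o b * (o b * _) := by
          rw [← mul_assoc, mul_div_cancel₀ _ hoa, ← mul_assoc, div_mul_cancel₀ _ hob]
      _ = w a b / i b * (i _ * _) := by rw [ih h', hmatch a b c hab hbc]
      _ = _ := by ring

end Telescoping

noncomputable section Flow

variable {S : Type*} [Fintype S] (A : S → S → Prop) (F : S → S → ℝ)

def outFlow (s : S) : ℝ := ∑ c ∈ univ.filter (fun c => A s c), F s c

def inFlow (s : S) : ℝ := ∑ p ∈ univ.filter (fun p => A p s), F p s

variable {A F}

theorem outFlow_pos (hFpos : ∀ s s', A s s' → 0 < F s s') {s s' : S} (h : A s s') :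
    0 < outFlow A F s :=
  Finset.sum_pos (fun c hc => hFpos s c (by simpa using hc)) ⟨s', by simpa using h⟩

theorem inFlow_pos (hFpos : ∀ s s', A s s' → 0 < F s s') {s s' : S} (h : A s s') :
    0 < inFlow A F s' :=
  Finset.sum_pos (fun p hp => hFpos p s' (by simpa using hp)) ⟨s, by simpa using h⟩

theorem outFlow_eq_zero_of_isSink {x : S} (hx : IsSink A x) : outFlow A F x = 0 := by
  simp [outFlow, hx _]

theorem inFlow_eq_zero_of_forall_not_rel {s : S} (hs : ∀ y, ¬ A y s) : inFlow A F s = 0 := by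
  simp [inFlow, hs]

end Flow

theorem trajectory_balance_general {S : Type*} [Fintype S]
    (A : S → S → Prop) (s₀ : S)
    (hsource : ∀ y, ¬ A y s₀)
    (F : S → S → ℝ)
    (hFpos : ∀ s s', A s s' → 0 < F s s')
    (hflow : ∀ s, s ≠ s₀ → ¬ IsSink A s →
      (∑ p ∈ univ.filter (fun p => A p s), F p s)
        = ∑ c ∈ univ.filter (fun c => A s c), F s c)
    (l : List S) (x : S)
    (hchain : l.Chain' A) (hhead : l.head? = some s₀)
    (hlast : l.getLast? = some x) (hx : IsSink A x) :
    (∑ c ∈ univ.filter (fun c => A s₀ c), F s₀ c)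
        * ((l.zip l.tail).map
            (fun e => F e.1 e.2 / ∑ c ∈ univ.filter (fun c => A e.1 c), F e.1 c)).prod
      = (∑ p ∈ univ.filter (fun p => A p x), F p x)
        * ((l.zip l.tail).map
            (fun e => F e.1 e.2 / ∑ p ∈ univ.filter (fun p => A p e.2), F p e.2)).prod := by
  match l, hchain, hhead, hlast with
  | [s], _, hhead, hlast =>
    obtain rfl : s = s₀ := by simpa using hhead
    obtain rfl : s = x := by simpa using hlast
    show outFlow A F s * _ = inFlow A F s * _
    rw [outFlow_eq_zero_of_isSink hx, inFlow_eq_zero_of_forall_not_rel hsource, zero_mul,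
      zero_mul]
  | a :: b :: rest, hchain, hhead, hlast =>
    obtain rfl : a = s₀ := by simpa using hhead
    obtain rfl : (b :: rest).getLast (List.cons_ne_nil _ _) = x := by
      simpa [List.getLast?_eq_some_getLast] using hlast
    exact List.IsChain.mul_prod_div_fst_eq_mul_prod_div_snd (R := A) F
      (fun _ _ h => (outFlow_pos hFpos h).ne') (fun _ _ h => (inFlow_pos hFpos h).ne')
      (fun s s' s'' (h : A s s') (h' : A s' s'') =>
        (hflow s' (fun hs => hsource s (hs ▸ h)) (fun hsink => hsink s'' h')).symm) hchain

/-- Trajectory balance: for a strictly positive edge flow `F` satisfying flow matching,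
with forward policy `P_F(s'|s) = F(s→s')/F_out(s)`, backward policy
`P_B(s|s') = F(s→s')/F_in(s')`, partition function `Z = F_out(s₀)` and reward
`R(x) = F_in(x)` at sink `x`, every complete trajectory `l` from `s₀` to `x`
satisfies `Z · ∏ P_F = R(x) · ∏ P_B`. -/
theorem trajectory_balance {S : Type*} [Fintype S] [DecidableEq S]
    (A : S → S → Prop) (s₀ : S)
    (hacyc : ∀ s : S, ¬ Relation.TransGen A s s)
    (hsource : ∀ y, ¬ A y s₀)
    (huniqsource : ∀ s, (∀ y, ¬ A y s) → s = s₀)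
    (F : S → S → ℝ)
    (hFpos : ∀ s s', A s s' → 0 < F s s')
    (hflow : ∀ s, s ≠ s₀ → ¬ IsSink A s →
      (∑ p ∈ univ.filter (fun p => A p s), F p s)
        = ∑ c ∈ univ.filter (fun c => A s c), F s c)
    (l : List S) (x : S)
    (hchain : l.Chain' A) (hhead : l.head? = some s₀)
    (hlast : l.getLast? = some x) (hx : IsSink A x) :
    (∑ c ∈ univ.filter (fun c => A s₀ c), F s₀ c)
        * ((l.zip l.tail).map
            (fun e => F e.1 e.2 / ∑ c ∈ univ.filter (fun c => A e.1 c), F e.1 c)).prod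
      = (∑ p ∈ univ.filter (fun p => A p x), F p x)
        * ((l.zip l.tail).map
            (fun e => F e.1 e.2 / ∑ p ∈ univ.filter (fun p => A p e.2), F p e.2)).prod :=
  trajectory_balance_general A s₀ hsource F hFpos hflow l x hchain hhead hlast hx
end

section
/- For a positive random variable R with E[(log R)²] < ∞ that is not almost surely constant, Jensen's inequality gives exp(E[log R]) < E[R]; hence a GFlowNet trained on a stochastic reward via squared log-loss (which samples proportionally to exp(E[log R(x)])) samples with probabilities strictly different from those proportional to the expected reward E[R(x)], whenever at least one reward R(x) is non-degenerate. -/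
/-! Write `R = exp Y` with `Y = log R`. Square integrability of `Y` on a probability space makes
`Y` integrable, and `Y` is not a.e. constant since `R` is not. Strict Jensen for the strictly
convex `exp` then gives `exp (E Y) < E (exp Y)` when `exp Y` is integrable; otherwise
`E R = ∞` and the inequality is trivial. -/

open MeasureTheory

namespace MeasureTheory

variable {Ω : Type*} [MeasurableSpace Ω] {μ : Measure Ω} [IsProbabilityMeasure μ] {Y : Ω → ℝ}

lemma exp_integral_lt_integral_exp (hY : Integrable Y μ)
    (hexp : Integrable (fun ω => Real.exp (Y ω)) μ) (hY_nonconst : ¬ ∃ c : ℝ, Y =ᵐ[μ] fun _ => c) :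
    Real.exp (∫ ω, Y ω ∂μ) < ∫ ω, Real.exp (Y ω) ∂μ := by
  have hJensen := strictConvexOn_exp.ae_eq_const_or_map_average_lt
    Real.continuous_exp.continuousOn isClosed_univ (ae_of_all _ fun ω => Set.mem_univ (Y ω)) hY hexp
  simp only [average_eq_integral] at hJensen
  exact hJensen.resolve_left fun hconst => hY_nonconst ⟨_, hconst⟩

lemma ofReal_exp_integral_lt_lintegral_exp (hY : Integrable Y μ)
    (hY_nonconst : ¬ ∃ c : ℝ, Y =ᵐ[μ] fun _ => c) :
    ENNReal.ofReal (Real.exp (∫ ω, Y ω ∂μ)) < ∫⁻ ω, ENNReal.ofReal (Real.exp (Y ω)) ∂μ := by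
  have hexp_nonneg : 0 ≤ᵐ[μ] fun ω => Real.exp (Y ω) := ae_of_all _ fun ω => (Real.exp_pos _).le
  by_cases hexp : Integrable (fun ω => Real.exp (Y ω)) μ
  · rw [← ofReal_integral_eq_lintegral_ofReal hexp hexp_nonneg]
    exact (ENNReal.ofReal_lt_ofReal_iff_of_nonneg (Real.exp_pos _).le).2
      (exp_integral_lt_integral_exp hY hexp hY_nonconst)
  · have hinfinite : ∫⁻ ω, ENNReal.ofReal (Real.exp (Y ω)) ∂μ = ⊤ := by
      by_contra hfinite
      exact hexp ((lintegral_ofReal_ne_top_iff_integrable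
        (Real.continuous_exp.comp_aestronglyMeasurable hY.aestronglyMeasurable) hexp_nonneg).1
        hfinite)
    rw [hinfinite]
    exact ENNReal.ofReal_lt_top

end MeasureTheory

/-- Strict Jensen inequality for the log: for a positive random variable `R` with
`E[(log R)²] < ∞` that is not almost surely constant,
`exp(E[log R]) < E[R]` (stated with the lower Lebesgue integral on the right so that
the inequality also covers the case `E[R] = ∞`). This quantifies the bias of training
a GFlowNet with squared log-loss under stochastic rewards: it samples proportionally
to `exp(E[log R(x)])`, which differs from the expected reward `E[R(x)]` whenever the
reward is non-degenerate. -/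
theorem exp_expectation_log_lt_expectation {Ω : Type*} [MeasurableSpace Ω]
    (μ : Measure Ω) [IsProbabilityMeasure μ]
    (R : Ω → ℝ) (hRmeas : Measurable R) (hRpos : ∀ ω, 0 < R ω)
    (hlogsq : Integrable (fun ω => (Real.log (R ω)) ^ 2) μ)
    (hnonconst : ¬ ∃ c : ℝ, R =ᵐ[μ] fun _ => c) :
    ENNReal.ofReal (Real.exp (∫ ω, Real.log (R ω) ∂μ))
      < ∫⁻ ω, ENNReal.ofReal (R ω) ∂μ := by
  have hlog : Integrable (fun ω => Real.log (R ω)) μ :=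
    ((memLp_two_iff_integrable_sq hRmeas.log.aestronglyMeasurable).2 hlogsq).integrable one_le_two
  have hlog_nonconst : ¬ ∃ c : ℝ, (fun ω => Real.log (R ω)) =ᵐ[μ] fun _ => c := by
    rintro ⟨c, hc⟩
    refine hnonconst ⟨Real.exp c, ?_⟩
    filter_upwards [hc] with ω hω
    rw [← hω, Real.exp_log (hRpos ω)]
  simpa only [Real.exp_log (hRpos _)] using ofReal_exp_integral_lt_lintegral_exp hlog hlog_nonconst
end
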